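/- arXiv:2604.00328 — 4 statements merged into one kernel-verified Lean document; each statement's English description precedes it below -/
import Mathlib

section
/- Isolation forces small margin for perceptrons defined by a finite union of intervals: Fix integers N, M ≥ 1, an arbitrary disorder matrix G = (g^1, …, g^M) ∈ (ℝ^N)^M, and a finite union of bounded closed intervals U as below. Then for every integer k ≥ 1, every k-isolated solution σ ∈ S_k°(G,U) satisfies m(σ) ≤ 2·‖G‖_∞ / √N. -/
open MeasureTheory ProbabilityTheory Filter Finset
open scoped NNReal ENNReal

noncomputable section

/-- The Boolean cube `{-1,1}^N` inside `ℝ^N`. -/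
def cube (N : ℕ) : Set (Fin N → ℝ) := {σ | ∀ i, σ i = 1 ∨ σ i = -1}

/-- Hamming distance `d_H(σ,τ) = (1/2)·Σ |σ_i − τ_i|`. -/
def dH {N : ℕ} (σ τ : Fin N → ℝ) : ℝ := (1 / 2) * ∑ i, |σ i - τ i|

/-- Hamming ball of radius `k` around `σ`, inside the cube. -/
def hammingBall {N : ℕ} (k : ℕ) (σ : Fin N → ℝ) : Set (Fin N → ℝ) :=
  {τ | τ ∈ cube N ∧ dH σ τ ≤ k}

/-- Solution set `S(G,U)` of the generalized perceptron with constraint set `U ⊆ ℝ`: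
`σ ∈ {-1,1}^N` with `⟨g^a, σ⟩/√N ∈ U` for all `a`. -/
def solSetU {N M : ℕ} (G : Fin M → Fin N → ℝ) (U : Set ℝ) : Set (Fin N → ℝ) :=
  {σ | σ ∈ cube N ∧ ∀ a : Fin M, (∑ i, G a i * σ i) / Real.sqrt N ∈ U}

/-- The set `S_k°(G,U)` of `k`-isolated solutions of the generalized perceptron. -/
def isoSetU {N M : ℕ} (G : Fin M → Fin N → ℝ) (U : Set ℝ) (k : ℕ) : Set (Fin N → ℝ) :=
  {σ | σ ∈ solSetU G U ∧ solSetU G U ∩ hammingBall k σ = {σ}}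

/-- Margin for the generalized perceptron:
`m(σ) = min_a dist(⟨g^a,σ⟩/√N, ℝ∖U)`. -/
def marginU {N M : ℕ} (G : Fin M → Fin N → ℝ) (U : Set ℝ) (σ : Fin N → ℝ) : ℝ :=
  ⨅ a : Fin M, Metric.infDist ((∑ i, G a i * σ i) / Real.sqrt N) Uᶜ

/-- Sup-norm `‖G‖_∞ = max_{i,a} |g_i^a|` of the disorder matrix. -/
def matSup {N M : ℕ} (G : Fin M → Fin N → ℝ) : ℝ := ⨆ a, ⨆ i, |G a i|

/-- **Isolation forces small margin for perceptrons defined by a finite union of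
bounded closed intervals** `U = [a₁,b₁] ∪ … ∪ [a_L,b_L]` with
`a₁ < b₁ < a₂ < b₂ < … < a_L < b_L`:  every `k`-isolated solution `σ ∈ S_k°(G,U)`
satisfies `m(σ) ≤ 2‖G‖_∞/√N`. -/
theorem isolation_implies_small_margin_union_of_intervals
    (N M : ℕ) (hN : 1 ≤ N) (hM : 1 ≤ M)
    (G : Fin M → Fin N → ℝ)
    (L : ℕ) (hL : 1 ≤ L) (a b : Fin L → ℝ)
    (hab : ∀ i, a i < b i)
    (horder : ∀ i j : Fin L, i < j → b i < a j)
    (U : Set ℝ) (hU : U = ⋃ i, Set.Icc (a i) (b i))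
    (k : ℕ) (hk : 1 ≤ k)
    (σ : Fin N → ℝ) (hσ : σ ∈ isoSetU G U k) :
    marginU G U σ ≤ 2 * matSup G / Real.sqrt N := by
  obtain ⟨⟨hσcube, hσsol⟩, hiso⟩ := hσ
  set i0 : Fin N := ⟨0, hN⟩ with hi0
  set τ : Fin N → ℝ := Function.update σ i0 (-(σ i0)) with hτ
  have hσi0 : |σ i0| = 1 := by rcases hσcube i0 with h | h <;> rw [h] <;> norm_num
  have hσne : σ i0 ≠ 0 := by
    intro h; rw [h] at hσi0; norm_num at hσi0
  have hτcube : τ ∈ cube N := by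
    intro j
    by_cases hj : j = i0
    · subst hj
      simp only [hτ, Function.update_self]
      rcases hσcube i0 with h | h
      · right; rw [h]
      · left; rw [h]; norm_num
    · simp only [hτ, Function.update_of_ne hj]; exact hσcube j
  have hτne : τ ≠ σ := by
    intro h
    have : τ i0 = σ i0 := by rw [h]
    simp only [hτ, Function.update_self] at this
    have : σ i0 = 0 := by linarith
    exact hσne this
  have hdH : dH σ τ = 1 := by
    unfold dH
    have hs : ∑ i, |σ i - τ i| = |σ i0 - τ i0| := by
      apply Finset.sum_eq_single_of_mem i0 (Finset.mem_univ _)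
      intro j _ hj
      simp [hτ, Function.update_of_ne hj]
    rw [hs]
    simp only [hτ, Function.update_self, sub_neg_eq_add]
    rw [show σ i0 + σ i0 = 2 * σ i0 by ring, abs_mul, hσi0]
    norm_num
  have hτnotsol : τ ∉ solSetU G U := by
    intro h
    have hmem : τ ∈ solSetU G U ∩ hammingBall k σ := by
      refine ⟨h, hτcube, ?_⟩
      rw [hdH]
      exact_mod_cast hk
    rw [hiso] at hmem
    exact hτne hmem
  have hex : ∃ a : Fin M, (∑ i, G a i * τ i) / Real.sqrt N ∈ Uᶜ := by
    by_contra h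
    push_neg at h
    exact hτnotsol ⟨hτcube, fun a => not_not.mp (h a)⟩
  obtain ⟨c, hc⟩ := hex
  -- compute the sum for τ
  have hsum : ∑ i, G c i * σ i - ∑ i, G c i * τ i = 2 * G c i0 * σ i0 := by
    rw [← Finset.sum_sub_distrib]
    have hs : ∑ i, (G c i * σ i - G c i * τ i) = G c i0 * σ i0 - G c i0 * τ i0 := by
      apply Finset.sum_eq_single_of_mem i0 (Finset.mem_univ _)
      intro j _ hj
      simp [hτ, Function.update_of_ne hj]
    rw [hs]
    simp only [hτ, Function.update_self]
    ring
  have hN0 : (0:ℝ) < Real.sqrt N := Real.sqrt_pos.mpr (by exact_mod_cast Nat.pos_of_ne_zero (by omega))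
  have hdist : Metric.infDist ((∑ i, G c i * σ i) / Real.sqrt N) Uᶜ
      ≤ 2 * |G c i0| / Real.sqrt N := by
    refine le_trans (Metric.infDist_le_dist_of_mem hc) ?_
    rw [Real.dist_eq, div_sub_div_same, hsum, abs_div, abs_of_pos hN0]
    apply div_le_div_of_nonneg_right ?_ hN0.le
    rw [abs_mul, abs_mul, hσi0, abs_two, mul_one]
  have hle : |G c i0| ≤ matSup G := by
    refine le_trans (le_ciSup (f := fun i => |G c i|) (Set.Finite.bddAbove (Set.finite_range _)) i0)
      (le_ciSup (f := fun a => ⨆ i, |G a i|) (Set.Finite.bddAbove (Set.finite_range _)) c)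
  have hmargin : marginU G U σ ≤ Metric.infDist ((∑ i, G c i * σ i) / Real.sqrt N) Uᶜ :=
    ciInf_le (Set.Finite.bddBelow (Set.finite_range _)) c
  refine le_trans hmargin (le_trans hdist ?_)
  gcongr

end
end

section
/- Perturbation bound for a solution in terms of its margin: Fix integers N, M ≥ 1, κ ∈ ℝ, η ∈ (0,1), and a deterministic disorder matrix G = (g^1, …, g^M) ∈ (ℝ^N)^M. Let G' be an N×M random matrix with i.i.d. standard Gaussian N(0,1) entries and set G̃ := √(1−η)·G + √η·G'. Then for every solution σ ∈ S(G,κ), P[σ ∈ S(G̃,κ)] ≤ P[Z ≥ (κ − √(1−η)·(κ + m(σ)))/√η], where Z is a standard Gaussian N(0,1) random variable. -/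
open MeasureTheory ProbabilityTheory Filter Finset
open scoped NNReal ENNReal

noncomputable section

/-- Solution set `S(G,κ)` of the asymmetric binary perceptron. -/
def solSet {N M : ℕ} (G : Fin M → Fin N → ℝ) (κ : ℝ) : Set (Fin N → ℝ) :=
  {σ | σ ∈ cube N ∧ ∀ a : Fin M, κ * Real.sqrt N ≤ ∑ i, G a i * σ i}

/-- Margin `m(σ) = min_a ⟨g^a,σ⟩/√N − κ`. -/
def margin {N M : ℕ} (G : Fin M → Fin N → ℝ) (κ : ℝ) (σ : Fin N → ℝ) : ℝ :=
  ⨅ a : Fin M, ((∑ i, G a i * σ i) / Real.sqrt N - κ)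

/-- Law of a random matrix (indexed as `Fin M → Fin N → ℝ`) with i.i.d. standard
Gaussian entries. -/
def gaussMat (N M : ℕ) : Measure (Fin M → Fin N → ℝ) :=
  Measure.pi fun _ => Measure.pi fun _ => gaussianReal 0 1

instance (N M : ℕ) : IsProbabilityMeasure (gaussMat N M) := by
  unfold gaussMat; infer_instance

/-- The correlated perturbation `√(1-η)·g + √η·g'`. -/
def tilde {N M : ℕ} (η : ℝ) (g g' : Fin M → Fin N → ℝ) : Fin M → Fin N → ℝ :=
  fun a i => Real.sqrt (1 - η) * g a i + Real.sqrt η * g' a i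

/- ### Auxiliary lemmas -/

lemma aux_pdf_mul_pdf (v w : ℝ≥0) (hv : v ≠ 0) (hw : w ≠ 0) (z x : ℝ) :
    gaussianPDFReal 0 v x * gaussianPDFReal x w z =
      gaussianPDFReal 0 (v + w) z *
        gaussianPDFReal ((v : ℝ) * z / ((v : ℝ) + w)) (v * w / (v + w)) x := by
  have ha : (0:ℝ) < v := lt_of_le_of_ne v.coe_nonneg (by exact_mod_cast (Ne.symm hv))
  have hb : (0:ℝ) < w := lt_of_le_of_ne w.coe_nonneg (by exact_mod_cast (Ne.symm hw))
  have hab : (0:ℝ) < (v:ℝ) + w := by linarith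
  have hcoe : ((v * w / (v + w) : ℝ≥0) : ℝ) = (v:ℝ) * w / ((v:ℝ) + w) := by
    push_cast; ring
  simp only [gaussianPDFReal, NNReal.coe_add, hcoe, sub_zero]
  rw [mul_mul_mul_comm, mul_mul_mul_comm ((Real.sqrt (2 * Real.pi * ((v:ℝ) + w)))⁻¹)]
  congr 1
  · rw [← mul_inv, ← mul_inv, ← Real.sqrt_mul (by positivity), ← Real.sqrt_mul (by positivity)]
    congr 2
    field_simp
  · rw [← Real.exp_add, ← Real.exp_add]
    congr 1
    field_simp
    ring

lemma aux_lintegral_pdf_conv (v w : ℝ≥0) (hv : v ≠ 0) (hw : w ≠ 0) (z : ℝ) :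
    ∫⁻ x, gaussianPDF 0 v x * gaussianPDF x w z = gaussianPDF 0 (v + w) z := by
  have hu : v * w / (v + w) ≠ 0 := by
    have : v + w ≠ 0 := by simp [hv]
    positivity
  calc ∫⁻ x, gaussianPDF 0 v x * gaussianPDF x w z
      = ∫⁻ x, gaussianPDF 0 (v + w) z *
          gaussianPDF ((v : ℝ) * z / ((v : ℝ) + w)) (v * w / (v + w)) x := by
        congr 1 with x
        simp only [gaussianPDF]
        rw [← ENNReal.ofReal_mul (gaussianPDFReal_nonneg _ _ _),
          ← ENNReal.ofReal_mul (gaussianPDFReal_nonneg _ _ _), aux_pdf_mul_pdf v w hv hw z x]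
    _ = gaussianPDF 0 (v + w) z := by
        rw [lintegral_const_mul _ (measurable_gaussianPDF _ _),
          lintegral_gaussianPDF_eq_one _ hu, mul_one]

lemma aux_measurable_pdf2 (w : ℝ≥0) :
    Measurable (fun p : ℝ × ℝ => gaussianPDF p.1 w p.2) := by
  apply Measurable.ennreal_ofReal
  simp only [gaussianPDFReal]
  exact measurable_const.mul (Real.measurable_exp.comp
    ((((measurable_snd.sub measurable_fst).pow_const 2).neg).div_const _))

set_option maxHeartbeats 1000000 in
lemma aux_gaussian_conv (v w : ℝ≥0) :
    Measure.map (fun p : ℝ × ℝ => p.1 + p.2)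
        ((gaussianReal 0 v).prod (gaussianReal 0 w)) = gaussianReal 0 (v + w) := by
  rcases eq_or_ne v 0 with rfl | hv
  · rw [gaussianReal_zero_var, Measure.dirac_prod,
      Measure.map_map (by fun_prop) (by fun_prop), zero_add]
    simp only [Function.comp_def, zero_add]
    exact Measure.map_id
  rcases eq_or_ne w 0 with rfl | hw
  · rw [gaussianReal_zero_var, Measure.prod_dirac,
      Measure.map_map (by fun_prop) (by fun_prop), add_zero]
    simp only [Function.comp_def, add_zero]
    exact Measure.map_id
  have hvw : v + w ≠ 0 := by simp [hv]
  ext s hs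
  rw [Measure.map_apply (by fun_prop) hs,
    Measure.prod_apply (hs.preimage (by fun_prop))]
  have h1 : ∀ x : ℝ, gaussianReal 0 w (Prod.mk x ⁻¹' ((fun p : ℝ × ℝ => p.1 + p.2) ⁻¹' s))
      = ∫⁻ z in s, gaussianPDF x w z := by
    intro x
    have : Prod.mk x ⁻¹' ((fun p : ℝ × ℝ => p.1 + p.2) ⁻¹' s) = (x + ·) ⁻¹' s := rfl
    rw [this, ← Measure.map_apply (by fun_prop) hs, gaussianReal_map_const_add,
      zero_add, gaussianReal_apply _ hw]
  simp_rw [h1]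
  rw [gaussianReal_of_var_ne_zero _ hv,
    lintegral_withDensity_eq_lintegral_mul _ (measurable_gaussianPDF _ _)]
  swap
  · exact Measurable.lintegral_prod_right' (ν := volume.restrict s) (aux_measurable_pdf2 w)
  simp only [Pi.mul_apply]
  have h2 : ∀ x : ℝ, gaussianPDF 0 v x * ∫⁻ z in s, gaussianPDF x w z
      = ∫⁻ z in s, gaussianPDF 0 v x * gaussianPDF x w z := fun x =>
    (lintegral_const_mul _ (measurable_gaussianPDF x w)).symm
  simp_rw [h2]
  rw [lintegral_lintegral_swap]
  swap
  · exact Measurable.aemeasurable (by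
      exact ((measurable_gaussianPDF 0 v).comp measurable_fst).mul (aux_measurable_pdf2 w))
  simp_rw [aux_lintegral_pdf_conv v w hv hw]
  rw [gaussianReal_apply _ hvw]

lemma aux_map_eval_pi {ι : Type*} [Fintype ι] [DecidableEq ι] {X : Type*} [MeasurableSpace X]
    (ν : Measure X) [IsProbabilityMeasure ν] (a : ι) :
    (Measure.pi fun _ : ι => ν).map (Function.eval a) = ν := by
  ext s hs
  rw [Measure.map_apply (measurable_pi_apply a) hs, Set.eval_preimage, Measure.pi_pi]
  rw [Finset.prod_eq_single a (fun b _ hb => by simp [Function.update_of_ne hb])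
    (by simp)]
  simp

lemma aux_map_weighted_sum : ∀ (n : ℕ) (c : Fin n → ℝ),
    Measure.map (fun x : Fin n → ℝ => ∑ i, c i * x i)
        (Measure.pi fun _ => gaussianReal 0 1)
      = gaussianReal 0 (∑ i, (NNReal.mk ((c i)^2) (sq_nonneg _) : ℝ≥0)) := by
  intro n
  induction n with
  | zero =>
    intro c
    simp only [Finset.univ_eq_empty, Finset.sum_empty]
    rw [show (fun x : Fin 0 → ℝ => (0:ℝ)) = fun _ => 0 from rfl, Measure.map_const]
    simp
  | succ n ih =>
    intro c
    have hmp := measurePreserving_piFinSuccAbove (fun _ : Fin (n+1) => gaussianReal 0 1) 0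
    set e := MeasurableEquiv.piFinSuccAbove (fun _ : Fin (n+1) => ℝ) 0
    have key : (fun x : Fin (n+1) → ℝ => ∑ i, c i * x i)
        = (fun p : ℝ × ℝ => p.1 + p.2) ∘
          (Prod.map (fun y : ℝ => c 0 * y) (fun x : Fin n → ℝ => ∑ j, c j.succ * x j)) ∘ e := by
      funext x
      simp only [Function.comp_apply, Prod.map_apply, e, MeasurableEquiv.piFinSuccAbove_apply]
      rw [Fin.sum_univ_succ]
      simp [Fin.removeNth, Fin.succAbove, Fin.tail]
    rw [key, ← Measure.map_map (by fun_prop) (by fun_prop),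
      ← Measure.map_map (by fun_prop) e.measurable, hmp.map_eq]
    rw [← Measure.map_prod_map _ _ (by fun_prop) (by fun_prop),
      gaussianReal_map_const_mul (c 0), ih (fun j => c j.succ), mul_zero, mul_one,
      aux_gaussian_conv]
    congr 1
    rw [Fin.sum_univ_succ]

/-- **Perturbation bound for a solution in terms of its margin.**
For a deterministic disorder `G`, a solution `σ ∈ S(G,κ)`, and the perturbed disorder
`G̃ = √(1-η)·G + √η·G'` with `G'` i.i.d. standard Gaussian, the probability (over `G'`)
that `σ` remains a solution of `G̃` is at most
`P[Z ≥ (κ − √(1−η)·(κ + m(σ)))/√η]` for a standard Gaussian `Z`. -/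
theorem perturbation_bound_solution
    (N M : ℕ) (hN : 1 ≤ N) (hM : 1 ≤ M) (κ : ℝ)
    (η : ℝ) (hη : η ∈ Set.Ioo (0 : ℝ) 1)
    (G : Fin M → Fin N → ℝ)
    (σ : Fin N → ℝ) (hσ : σ ∈ solSet G κ) :
    gaussMat N M {g' | σ ∈ solSet (tilde η G g') κ}
      ≤ gaussianReal 0 1
          {z : ℝ | (κ - Real.sqrt (1 - η) * (κ + margin G κ σ)) / Real.sqrt η ≤ z} := by
  obtain ⟨hη0, hη1⟩ := hη
  obtain ⟨hcube, -⟩ := hσ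
  have hNpos : (0:ℝ) < N := by exact_mod_cast hN
  have hsN : (0:ℝ) < Real.sqrt N := Real.sqrt_pos.2 hNpos
  have hsη : (0:ℝ) < Real.sqrt η := Real.sqrt_pos.2 hη0
  have : Nonempty (Fin M) := ⟨⟨0, hM⟩⟩
  obtain ⟨a, ha⟩ := exists_eq_ciInf_of_finite
    (f := fun a : Fin M => (∑ i, G a i * σ i) / Real.sqrt N - κ)
  set m := margin G κ σ with hm
  have ha' : (∑ i, G a i * σ i) / Real.sqrt N - κ = m := ha
  have hGa : ∑ i, G a i * σ i = (κ + m) * Real.sqrt N := by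
    field_simp at ha'
    linarith
  set c := (κ - Real.sqrt (1 - η) * (κ + m)) / Real.sqrt η with hc
  set T : (Fin M → Fin N → ℝ) → ℝ := fun g' => ∑ i, (σ i / Real.sqrt N) * g' a i with hT
  have hsub : {g' | σ ∈ solSet (tilde η G g') κ} ⊆ T ⁻¹' Set.Ici c := by
    intro g' hg'
    have h := hg'.2 a
    simp only [tilde] at h
    have hexp : ∑ i, (Real.sqrt (1-η) * G a i + Real.sqrt η * g' a i) * σ i
        = Real.sqrt (1-η) * ∑ i, G a i * σ i + Real.sqrt η * ∑ i, g' a i * σ i := by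
      rw [Finset.mul_sum, Finset.mul_sum, ← Finset.sum_add_distrib]
      exact Finset.sum_congr rfl fun i _ => by ring
    rw [hexp, hGa] at h
    have hS : T g' = (∑ i, g' a i * σ i) / Real.sqrt N := by
      rw [hT, Finset.sum_div]
      exact Finset.sum_congr rfl fun i _ => by ring
    show c ≤ T g'
    rw [hS, hc, div_le_div_iff₀ hsη hsN]
    nlinarith [h]
  have hfmeas : Measurable (fun x : Fin N → ℝ => ∑ i, (σ i / Real.sqrt N) * x i) := by
    fun_prop
  have hTmeas : Measurable T := by
    rw [hT]
    fun_prop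
  have hvar : (∑ i : Fin N, (NNReal.mk ((σ i / Real.sqrt N)^2) (sq_nonneg _) : ℝ≥0)) = 1 := by
    apply NNReal.coe_injective
    rw [NNReal.coe_sum]
    simp only [NNReal.coe_mk, NNReal.coe_one]
    have hsq : ∀ i, (σ i / Real.sqrt N)^2 = 1 / N := by
      intro i
      rcases hcube i with h | h <;>
        rw [div_pow, h, Real.sq_sqrt hNpos.le] <;> norm_num
    rw [Finset.sum_congr rfl fun i _ => hsq i, Finset.sum_const]
    simp only [Finset.card_univ, Fintype.card_fin, nsmul_eq_mul]
    field_simp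
  have hmap : (gaussMat N M).map T = gaussianReal 0 1 := by
    have hTcomp : T = (fun x : Fin N → ℝ => ∑ i, (σ i / Real.sqrt N) * x i) ∘
        (Function.eval a) := rfl
    rw [hTcomp, ← Measure.map_map hfmeas (measurable_pi_apply a)]
    rw [show (gaussMat N M).map (Function.eval a)
        = Measure.pi fun _ : Fin N => gaussianReal 0 1 from
      aux_map_eval_pi (Measure.pi fun _ : Fin N => gaussianReal 0 1) a]
    rw [aux_map_weighted_sum N (fun i => σ i / Real.sqrt N), hvar]
  calc gaussMat N M {g' | σ ∈ solSet (tilde η G g') κ}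
      ≤ gaussMat N M (T ⁻¹' Set.Ici c) := measure_mono hsub
    _ = ((gaussMat N M).map T) (Set.Ici c) :=
        (Measure.map_apply hTmeas measurableSet_Ici).symm
    _ = gaussianReal 0 1 (Set.Ici c) := by rw [hmap]

end
end

section
/- Perturbation bound for a non-solution: Fix integers N, M ≥ 1, κ ∈ ℝ, η ∈ (0,1), and a deterministic disorder matrix G = (g^1, …, g^M) ∈ (ℝ^N)^M. Let G' be an N×M random matrix with i.i.d. standard Gaussian N(0,1) entries and set G̃ := √(1−η)·G + √η·G'. Then for every τ ∈ {−1,1}^N with τ ∉ S(G,κ) (i.e. ⟨g^a, τ⟩ < κ√N for some 1 ≤ a ≤ M), P[τ ∈ S(G̃,κ)] ≤ P[Z ≥ κ·(1 − √(1−η))/√η], where Z is a standard Gaussian N(0,1) random variable. -/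
open MeasureTheory ProbabilityTheory Filter Finset
open scoped NNReal ENNReal

noncomputable section

section AuxGauss
open Real

lemma conv_pdf (a b : ℝ≥0) (ha : a ≠ 0) (hb : b ≠ 0) (z : ℝ) :
    ∫ x, gaussianPDFReal 0 a x * gaussianPDFReal 0 b (z - x)
      = gaussianPDFReal 0 (a + b) z := by
  have ha' : (0:ℝ) < a := by positivity
  have hb' : (0:ℝ) < b := by positivity
  have hab : (0:ℝ) < (a:ℝ) + b := by linarith
  have ha0 : (a:ℝ) ≠ 0 := ne_of_gt ha'
  have hb0 : (b:ℝ) ≠ 0 := ne_of_gt hb'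
  have hab0 : (a:ℝ) + b ≠ 0 := ne_of_gt hab
  have hk : (0:ℝ) < ((a:ℝ) + b) / (2 * a * b) := by positivity
  have key : ∀ x : ℝ, gaussianPDFReal 0 a x * gaussianPDFReal 0 b (z - x)
      = ((Real.sqrt (2 * π * a))⁻¹ * (Real.sqrt (2 * π * b))⁻¹
          * Real.exp (- z ^ 2 / (2 * ((a:ℝ) + b))))
        * Real.exp (- (((a:ℝ) + b) / (2 * a * b))
            * (x - (a:ℝ) * z / ((a:ℝ) + b)) ^ 2) := by
    intro x
    simp only [gaussianPDFReal, sub_zero]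
    have h1 : Real.exp (- x ^ 2 / (2 * (a:ℝ))) * Real.exp (- (z - x) ^ 2 / (2 * (b:ℝ)))
        = Real.exp (- z ^ 2 / (2 * ((a:ℝ) + b)))
          * Real.exp (- (((a:ℝ) + b) / (2 * a * b))
              * (x - (a:ℝ) * z / ((a:ℝ) + b)) ^ 2) := by
      rw [← Real.exp_add, ← Real.exp_add]
      congr 1
      field_simp
      ring
    calc (√(2 * π * (a:ℝ)))⁻¹ * rexp (-x ^ 2 / (2 * (a:ℝ)))
          * ((√(2 * π * (b:ℝ)))⁻¹ * rexp (-(z - x) ^ 2 / (2 * (b:ℝ))))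
        = (√(2 * π * (a:ℝ)))⁻¹ * (√(2 * π * (b:ℝ)))⁻¹
          * (rexp (-x ^ 2 / (2 * (a:ℝ))) * rexp (-(z - x) ^ 2 / (2 * (b:ℝ)))) := by ring
      _ = _ := by rw [h1]; ring
  rw [MeasureTheory.integral_congr_ae (Filter.Eventually.of_forall key),
    MeasureTheory.integral_const_mul,
    MeasureTheory.integral_sub_right_eq_self (μ := volume)
      (fun x : ℝ => Real.exp (- (((a:ℝ) + b) / (2 * a * b)) * x ^ 2)) ((a:ℝ) * z / ((a:ℝ) + b)),
    integral_gaussian]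
  simp only [gaussianPDFReal, sub_zero]
  rw [show ∀ p q r s : ℝ, p * q * r * s = (p * q * s) * r by intros; ring]
  congr 1
  rw [← Real.sqrt_inv, ← Real.sqrt_inv, ← Real.sqrt_inv,
    ← Real.sqrt_mul (by positivity), ← Real.sqrt_mul (by positivity)]
  congr 1
  push_cast
  field_simp

lemma integrable_conv (a b : ℝ≥0) (z : ℝ) :
    Integrable (fun x => gaussianPDFReal 0 a x * gaussianPDFReal 0 b (z - x)) := by
  have : (fun x => gaussianPDFReal 0 a x * gaussianPDFReal 0 b (z - x))
      = fun x => gaussianPDFReal 0 b (z - x) * gaussianPDFReal 0 a x := by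
    funext x; ring
  rw [this]
  refine Integrable.bdd_mul (integrable_gaussianPDFReal 0 a)
    ((measurable_gaussianPDFReal 0 b).comp (measurable_const.sub measurable_id)).aestronglyMeasurable
    (c := (Real.sqrt (2 * π * b))⁻¹) (Filter.Eventually.of_forall fun x => ?_)
  rw [Real.norm_eq_abs, abs_of_nonneg (gaussianPDFReal_nonneg _ _ _)]
  unfold gaussianPDFReal
  calc (√(2 * π * (b:ℝ)))⁻¹ * rexp (-(z - x - 0) ^ 2 / (2 * (b:ℝ)))
      ≤ (√(2 * π * (b:ℝ)))⁻¹ * 1 := by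
        refine mul_le_mul_of_nonneg_left ?_ (by positivity)
        rw [Real.exp_le_one_iff, neg_div]
        have : (0:ℝ) ≤ (z - x - 0) ^ 2 / (2 * (b:ℝ)) := by positivity
        linarith
    _ = _ := mul_one _

lemma conv_pdf' (a b : ℝ≥0) (ha : a ≠ 0) (hb : b ≠ 0) (z : ℝ) :
    ∫⁻ x, gaussianPDF 0 a x * gaussianPDF 0 b (z - x)
      = gaussianPDF 0 (a + b) z := by
  simp only [gaussianPDF]
  rw [show (fun x => ENNReal.ofReal (gaussianPDFReal 0 a x)
        * ENNReal.ofReal (gaussianPDFReal 0 b (z - x)))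
      = fun x => ENNReal.ofReal (gaussianPDFReal 0 a x * gaussianPDFReal 0 b (z - x)) from ?_]
  · rw [← ofReal_integral_eq_lintegral_ofReal (integrable_conv a b z)
      (Filter.Eventually.of_forall fun x =>
        mul_nonneg (gaussianPDFReal_nonneg _ _ _) (gaussianPDFReal_nonneg _ _ _)),
      conv_pdf a b ha hb z]
  · funext x
    rw [ENNReal.ofReal_mul (gaussianPDFReal_nonneg _ _ _)]

lemma gauss_conv (a b : ℝ≥0) :
    Measure.map (fun p : ℝ × ℝ => p.1 + p.2)
        ((gaussianReal 0 a).prod (gaussianReal 0 b)) = gaussianReal 0 (a + b) := by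
  by_cases hb : b = 0
  · subst hb
    rw [gaussianReal_zero_var, Measure.prod_dirac, add_zero,
      Measure.map_map measurable_add (measurable_id'.prodMk measurable_const),
      show ((fun p : ℝ × ℝ => p.1 + p.2) ∘ fun x : ℝ => (x, (0:ℝ))) = id from
        funext fun x => add_zero x, Measure.map_id]
  by_cases ha : a = 0
  · subst ha
    rw [gaussianReal_zero_var, Measure.dirac_prod, zero_add,
      Measure.map_map measurable_add (measurable_prodMk_left : Measurable (Prod.mk (0:ℝ))),
      show ((fun p : ℝ × ℝ => p.1 + p.2) ∘ Prod.mk (0:ℝ)) = id from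
        funext fun x => zero_add x, Measure.map_id]
  ext s hs
  rw [Measure.map_apply measurable_add hs,
    Measure.prod_apply (measurable_add hs)]
  have hQ : ∀ x : ℝ, (gaussianReal 0 b) (Prod.mk x ⁻¹' ((fun p : ℝ × ℝ => p.1 + p.2) ⁻¹' s))
      = ∫⁻ y, Set.indicator s (fun z => gaussianPDF 0 b (z - x)) (x + y) := by
    intro x
    rw [gaussianReal_of_var_ne_zero 0 hb,
      withDensity_apply _ (measurable_prodMk_left (measurable_add hs))]
    rw [← lintegral_indicator (measurable_prodMk_left (measurable_add hs))]
    congr 1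
    funext y
    by_cases hy : x + y ∈ s
    · rw [Set.indicator_of_mem
          (show y ∈ Prod.mk x ⁻¹' ((fun p : ℝ × ℝ => p.1 + p.2) ⁻¹' s) from hy),
        Set.indicator_of_mem hy, add_sub_cancel_left]
    · rw [Set.indicator_of_notMem
          (show y ∉ Prod.mk x ⁻¹' ((fun p : ℝ × ℝ => p.1 + p.2) ⁻¹' s) from hy),
        Set.indicator_of_notMem hy]
  simp_rw [hQ]
  have hInd : ∀ x z : ℝ, Set.indicator s (fun z => gaussianPDF 0 b (z - x)) z
      = gaussianPDF 0 b (z - x) * Set.indicator s (fun _ => (1:ℝ≥0∞)) z := by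
    intro x z
    by_cases hz : z ∈ s
    · rw [Set.indicator_of_mem hz, Set.indicator_of_mem hz, mul_one]
    · rw [Set.indicator_of_notMem hz, Set.indicator_of_notMem hz, mul_zero]
  have hT : ∀ x : ℝ, (∫⁻ y, Set.indicator s (fun z => gaussianPDF 0 b (z - x)) (x + y))
      = ∫⁻ z, gaussianPDF 0 b (z - x) * Set.indicator s (fun _ => (1:ℝ≥0∞)) z := by
    intro x
    rw [lintegral_add_left_eq_self (fun z => Set.indicator s
      (fun z => gaussianPDF 0 b (z - x)) z) x]
    simp_rw [hInd]
  simp_rw [hT]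
  have hmeas : Measurable fun q : ℝ × ℝ =>
      gaussianPDF 0 b (q.2 - q.1) * Set.indicator s (fun _ => (1:ℝ≥0∞)) q.2 :=
    (((measurable_gaussianPDF 0 b).comp (measurable_snd.sub measurable_fst)).mul
      ((measurable_const.indicator hs).comp measurable_snd))
  have hF : Measurable fun x : ℝ =>
      ∫⁻ z, gaussianPDF 0 b (z - x) * Set.indicator s (fun _ => (1:ℝ≥0∞)) z :=
    Measurable.lintegral_prod_right hmeas
  rw [gaussianReal_of_var_ne_zero 0 ha,
    lintegral_withDensity_eq_lintegral_mul _ (measurable_gaussianPDF 0 a) hF]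
  simp only [Pi.mul_apply]
  have hstep : ∀ x : ℝ, gaussianPDF 0 a x
        * ∫⁻ z, gaussianPDF 0 b (z - x) * Set.indicator s (fun _ => (1:ℝ≥0∞)) z
      = ∫⁻ z, gaussianPDF 0 a x * gaussianPDF 0 b (z - x)
          * Set.indicator s (fun _ => (1:ℝ≥0∞)) z := by
    intro x
    have hfx : Measurable fun z : ℝ =>
        gaussianPDF 0 b (z - x) * Set.indicator s (fun _ => (1:ℝ≥0∞)) z := by
      exact ((measurable_gaussianPDF 0 b).comp
        (measurable_id.sub measurable_const)).mul (measurable_const.indicator hs)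
    rw [← lintegral_const_mul _ hfx]
    simp_rw [mul_assoc]
  simp_rw [hstep]
  rw [lintegral_lintegral_swap]
  · have hinner : ∀ z : ℝ, (∫⁻ x, gaussianPDF 0 a x * gaussianPDF 0 b (z - x)
        * Set.indicator s (fun _ => (1:ℝ≥0∞)) z)
        = Set.indicator s (gaussianPDF 0 (a + b)) z := by
      intro z
      have hfz : Measurable fun x : ℝ => gaussianPDF 0 a x * gaussianPDF 0 b (z - x) := by
        exact (measurable_gaussianPDF 0 a).mul
          ((measurable_gaussianPDF 0 b).comp (measurable_const.sub measurable_id))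
      rw [lintegral_mul_const _ hfz, conv_pdf' a b ha hb z]
      by_cases hz : z ∈ s
      · rw [Set.indicator_of_mem hz, Set.indicator_of_mem hz, mul_one]
      · rw [Set.indicator_of_notMem hz, Set.indicator_of_notMem hz, mul_zero]
    simp_rw [hinner]
    rw [lintegral_indicator hs, gaussianReal_of_var_ne_zero 0 (by simp [ha]),
      withDensity_apply _ hs]
  · have : Measurable (Function.uncurry fun x z : ℝ => gaussianPDF 0 a x
        * gaussianPDF 0 b (z - x) * Set.indicator s (fun _ => (1:ℝ≥0∞)) z) := by
      exact (((measurable_gaussianPDF 0 a).comp measurable_fst).mul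
        ((measurable_gaussianPDF 0 b).comp (measurable_snd.sub measurable_fst))).mul
        ((measurable_const.indicator hs).comp measurable_snd)
    exact this.aemeasurable

lemma map_add_of_maps {α β : Type*} [MeasurableSpace α] [MeasurableSpace β]
    (μ : Measure α) (ν : Measure β) [SFinite μ] [SFinite ν]
    {X : α → ℝ} {Y : β → ℝ} (hXm : Measurable X) (hYm : Measurable Y)
    {a b : ℝ≥0} (hX : Measure.map X μ = gaussianReal 0 a)
    (hY : Measure.map Y ν = gaussianReal 0 b) :
    Measure.map (fun p : α × β => X p.1 + Y p.2) (μ.prod ν) = gaussianReal 0 (a + b) := by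
  have : (fun p : α × β => X p.1 + Y p.2)
      = (fun p : ℝ × ℝ => p.1 + p.2) ∘ (Prod.map X Y) := rfl
  rw [this, ← Measure.map_map measurable_add (hXm.prodMap hYm),
    ← Measure.map_prod_map _ _ hXm hYm, hX, hY, gauss_conv]

lemma map_sum_pm (n : ℕ) (τ : Fin n → ℝ) (hτ : ∀ i, τ i = 1 ∨ τ i = -1) :
    Measure.map (fun g : Fin n → ℝ => ∑ i, τ i * g i)
        (Measure.pi fun _ => gaussianReal 0 1) = gaussianReal 0 n := by
  induction n with
  | zero =>
      rw [show (fun g : Fin 0 → ℝ => ∑ i, τ i * g i) = fun _ => (0:ℝ) by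
          funext g; simp]
      rw [Measure.map_const]
      simp
  | succ n ih =>
      have mp := (measurePreserving_piFinSuccAbove
        (fun _ : Fin (n+1) => gaussianReal 0 1) 0).symm
      have hmS : Measurable fun g : Fin (n+1) → ℝ => ∑ i, τ i * g i := by
        exact Finset.measurable_sum _ fun i _ => (measurable_pi_apply i).const_mul _
      rw [← mp.map_eq, Measure.map_map hmS (MeasurableEquiv.measurable _)]
      have hcomp : ((fun g : Fin (n+1) → ℝ => ∑ i, τ i * g i)
            ∘ (MeasurableEquiv.piFinSuccAbove (fun _ : Fin (n+1) => ℝ) 0).symm)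
          = fun p : ℝ × (Fin n → ℝ) => τ 0 * p.1 + ∑ j, τ j.succ * p.2 j := by
        funext p
        simp only [Function.comp, MeasurableEquiv.piFinSuccAbove_symm_apply]
        rw [Fin.sum_univ_succ]
        simp [Fin.insertNth_zero]
      rw [hcomp]
      have hτ0 : Measure.map (fun x : ℝ => τ 0 * x) (gaussianReal 0 1)
          = gaussianReal 0 1 := by
        rw [gaussianReal_map_const_mul (τ 0)]
        have h2 : (⟨(τ 0)^2, sq_nonneg _⟩ : ℝ≥0) = 1 := by
          ext
          rcases hτ 0 with h | h <;> rw [h] <;> norm_num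
        rw [mul_zero, mul_one]; exact congrArg (gaussianReal 0) h2
      have hsum := ih (fun j => τ j.succ) (fun j => hτ j.succ)
      have := map_add_of_maps (gaussianReal 0 1)
        (Measure.pi fun _ : Fin n => gaussianReal 0 1)
        (X := fun x : ℝ => τ 0 * x) (Y := fun g : Fin n → ℝ => ∑ j, τ j.succ * g j)
        (measurable_id'.const_mul (τ 0))
        (show Measurable fun g : Fin n → ℝ => ∑ j, τ j.succ * g j from
          Finset.measurable_sum _ fun i _ => (measurable_pi_apply i).const_mul _)
        hτ0 hsum
      rw [this]
      congr 1
      push_cast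
      ring

end AuxGauss

/-- **Perturbation bound for a non-solution.**
For a deterministic disorder `G`, a point `τ ∈ {-1,1}^N` that is *not* a solution of
`(G,κ)`, and the perturbed disorder `G̃ = √(1-η)·G + √η·G'` with `G'` i.i.d. standard
Gaussian, the probability (over `G'`) that `τ` is a solution of `G̃` is at most
`P[Z ≥ κ·(1 − √(1−η))/√η]` for a standard Gaussian `Z`. -/
theorem perturbation_bound_nonsolution
    (N M : ℕ) (hN : 1 ≤ N) (hM : 1 ≤ M) (κ : ℝ)
    (η : ℝ) (hη : η ∈ Set.Ioo (0 : ℝ) 1)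
    (G : Fin M → Fin N → ℝ)
    (τ : Fin N → ℝ) (hτcube : τ ∈ cube N) (hτ : τ ∉ solSet G κ) :
    gaussMat N M {g' | τ ∈ solSet (tilde η G g') κ}
      ≤ gaussianReal 0 1
          {z : ℝ | κ * (1 - Real.sqrt (1 - η)) / Real.sqrt η ≤ z} := by
  obtain ⟨hηpos, hηlt⟩ := hη
  have h1η : (0:ℝ) < 1 - η := by linarith
  have hcη : 0 < Real.sqrt η := Real.sqrt_pos.mpr hηpos
  have hc1 : 0 ≤ Real.sqrt (1 - η) := Real.sqrt_nonneg _
  have hNpos : (0:ℝ) < (N:ℝ) := by exact_mod_cast Nat.pos_of_ne_zero (by omega)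
  have hcN : 0 < Real.sqrt (N:ℝ) := Real.sqrt_pos.mpr hNpos
  set t : ℝ := κ * (1 - Real.sqrt (1 - η)) / Real.sqrt η with ht_def
  obtain ⟨a, hA⟩ : ∃ a : Fin M, ∑ i, G a i * τ i < κ * Real.sqrt N := by
    by_contra h
    push_neg at h
    exact hτ ⟨hτcube, h⟩
  set B : Set (Fin N → ℝ) := {row | t * Real.sqrt N ≤ ∑ i, τ i * row i} with hB_def
  have hsub : {g' | τ ∈ solSet (tilde η G g') κ} ⊆ Function.eval a ⁻¹' B := by
    intro g' hg'
    have h2 := hg'.2 a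
    have hexp : ∑ i, tilde η G g' a i * τ i
        = Real.sqrt (1 - η) * ∑ i, G a i * τ i
          + Real.sqrt η * ∑ i, τ i * g' a i := by
      simp only [tilde]
      rw [Finset.mul_sum, Finset.mul_sum, ← Finset.sum_add_distrib]
      congr 1
      funext i
      ring
    rw [hexp] at h2
    show t * Real.sqrt N ≤ ∑ i, τ i * g' a i
    rw [ht_def, div_mul_eq_mul_div, div_le_iff₀ hcη]
    nlinarith [mul_le_mul_of_nonneg_left hA.le hc1]
  refine le_trans (measure_mono hsub) (le_of_eq ?_)
  have hmarg : gaussMat N M (Function.eval a ⁻¹' B)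
      = (Measure.pi fun _ : Fin N => gaussianReal 0 1) B := by
    have hset : Function.eval a ⁻¹' B
        = Set.pi Set.univ
            (Function.update (fun _ : Fin M => (Set.univ : Set (Fin N → ℝ))) a B) := by
      ext g'
      simp only [Set.mem_preimage, Set.mem_pi, Set.mem_univ, forall_true_left]
      constructor
      · intro h j
        by_cases hj : j = a
        · subst hj; rw [Function.update_self]; exact h
        · rw [Function.update_of_ne hj]; trivial
      · intro h
        have := h a
        rwa [Function.update_self] at this
    rw [hset]
    unfold gaussMat
    rw [Measure.pi_pi]
    rw [Finset.prod_eq_single a]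
    · rw [Function.update_self]
    · intro j _ hj
      rw [Function.update_of_ne hj]
      simp
    · intro h
      exact absurd (Finset.mem_univ a) h
  rw [hmarg]
  have hIci : MeasurableSet {x : ℝ | t * Real.sqrt N ≤ x} :=
    measurableSet_le measurable_const measurable_id
  have hmS : Measurable fun g : Fin N → ℝ => ∑ i, τ i * g i :=
    Finset.measurable_sum _ fun i _ => (measurable_pi_apply i).const_mul _
  have hBpre : B = (fun g : Fin N → ℝ => ∑ i, τ i * g i) ⁻¹' {x | t * Real.sqrt N ≤ x} := rfl
  rw [hBpre, ← Measure.map_apply hmS hIci, map_sum_pm N τ hτcube]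
  have hmapN : Measure.map (fun z : ℝ => Real.sqrt (N:ℝ) * z) (gaussianReal 0 1)
      = gaussianReal 0 ((N:ℕ) : ℝ≥0) := by
    rw [gaussianReal_map_const_mul (Real.sqrt (N:ℝ))]
    congr 1
    · exact mul_zero _
    · rw [mul_one]
      ext
      push_cast
      rw [Real.sq_sqrt hNpos.le]
  rw [← hmapN, Measure.map_apply (measurable_id'.const_mul _) hIci]
  congr 1
  ext z
  simp only [Set.mem_preimage, Set.mem_setOf_eq]
  rw [mul_comm t (Real.sqrt (N:ℝ))]
  exact mul_le_mul_iff_right₀ hcN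

end
end

section
/- Balanced partition lemma I: Let M ≥ 1 and let p_1, …, p_M be nonnegative real numbers with R := Σ_{i=1}^M p_i ≥ 0.8 and max_{1≤i≤M} p_i ≤ 0.51. Then there exists a partition [M] = C_1 ⊔ C_2 into two disjoint sets such that Σ_{i∈C_1} p_i ≥ R/3 and Σ_{i∈C_2} p_i ≥ R/3. Moreover, for this partition, (Σ_{i∈C_1} p_i) · (Σ_{i∈C_2} p_i) ≥ (R/3)·(2R/3) = 2R²/9. -/
open Finset

/-- **Balanced partition lemma I.**
If `p₁,…,p_M ≥ 0` satisfy `R := Σᵢ pᵢ ≥ 0.8` and `max pᵢ ≤ 0.51`, then `[M]` can be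
partitioned into two disjoint sets `C₁ ⊔ C₂` with `Σ_{C₁} pᵢ ≥ R/3` and
`Σ_{C₂} pᵢ ≥ R/3`; moreover for this partition
`(Σ_{C₁} pᵢ)·(Σ_{C₂} pᵢ) ≥ (R/3)·(2R/3) = 2R²/9`. -/
theorem balanced_partition_I
    (M : ℕ) (hM : 1 ≤ M) (p : Fin M → ℝ) (hp : ∀ i, 0 ≤ p i)
    (R : ℝ) (hR : R = ∑ i, p i)
    (hRlb : 0.8 ≤ R) (hmax : ∀ i, p i ≤ 0.51) :
    ∃ C₁ C₂ : Finset (Fin M), Disjoint C₁ C₂ ∧ C₁ ∪ C₂ = Finset.univ ∧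
      R / 3 ≤ ∑ i ∈ C₁, p i ∧ R / 3 ≤ ∑ i ∈ C₂, p i ∧
      R / 3 * (2 * R / 3) ≤ (∑ i ∈ C₁, p i) * (∑ i ∈ C₂, p i) ∧
      2 * R ^ 2 / 9 ≤ (∑ i ∈ C₁, p i) * (∑ i ∈ C₂, p i) := by
  have hR0 : (0:ℝ) < R := by linarith
  -- It suffices to find one set with sum in [R/3, 2R/3].
  have key : ∀ C : Finset (Fin M), R/3 ≤ ∑ i ∈ C, p i → (∑ i ∈ C, p i) ≤ 2*R/3 →
      ∃ C₁ C₂ : Finset (Fin M), Disjoint C₁ C₂ ∧ C₁ ∪ C₂ = Finset.univ ∧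
      R / 3 ≤ ∑ i ∈ C₁, p i ∧ R / 3 ≤ ∑ i ∈ C₂, p i ∧
      R / 3 * (2 * R / 3) ≤ (∑ i ∈ C₁, p i) * (∑ i ∈ C₂, p i) ∧
      2 * R ^ 2 / 9 ≤ (∑ i ∈ C₁, p i) * (∑ i ∈ C₂, p i) := by
    intro C h1 h2
    have hsum : (∑ i ∈ C, p i) + ∑ i ∈ Cᶜ, p i = R := by
      rw [hR]; exact Finset.sum_add_sum_compl C p
    set x := ∑ i ∈ C, p i
    set y := ∑ i ∈ Cᶜ, p i
    have hy : R/3 ≤ y := by linarith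
    have hprod : R / 3 * (2 * R / 3) ≤ x * y := by
      nlinarith [mul_nonneg (by linarith : (0:ℝ) ≤ x - R/3) (by linarith : (0:ℝ) ≤ 2*R/3 - x)]
    exact ⟨C, Cᶜ, disjoint_compl_right, Finset.union_compl C, h1, hy, hprod,
      by nlinarith⟩
  by_cases hex : ∃ i, R/3 ≤ p i
  · obtain ⟨i, hi⟩ := hex
    refine key {i} ?_ ?_ <;> rw [Finset.sum_singleton]
    · exact hi
    · have := hmax i; linarith
  · push_neg at hex
    have hne : (Finset.univ.powerset.filter (fun C => R/3 ≤ ∑ i ∈ C, p i)).Nonempty :=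
      ⟨Finset.univ, by simp [← hR]; linarith⟩
    obtain ⟨C, hCmem, hCmin⟩ :=
      Finset.exists_min_image _ (fun C => ∑ i ∈ C, p i) hne
    simp only [Finset.mem_filter] at hCmem
    have h1 : R/3 ≤ ∑ i ∈ C, p i := hCmem.2
    -- find an element of C with positive weight
    have hposelem : ∃ i ∈ C, 0 < p i := by
      by_contra h
      push_neg at h
      have : (∑ i ∈ C, p i) ≤ 0 := Finset.sum_nonpos h
      linarith
    obtain ⟨i, hiC, hipos⟩ := hposelem
    have herase : (∑ j ∈ C.erase i, p j) + p i = ∑ j ∈ C, p j :=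
      Finset.sum_erase_add C p hiC
    have hlt : ¬ (R/3 ≤ ∑ j ∈ C.erase i, p j) := by
      intro hge
      have hmem : C.erase i ∈ Finset.univ.powerset.filter (fun C => R/3 ≤ ∑ i ∈ C, p i) := by
        simp only [Finset.mem_filter, Finset.mem_powerset]
        exact ⟨Finset.subset_univ _, hge⟩
      have := hCmin _ hmem
      linarith
    push_neg at hlt
    have := hex i
    exact key C h1 (by linarith)
end
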